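/- Let γ ∈ (−1,1) and let Ω be an open subset of {(x',y,t) ∈ ℝ^{n−1}×ℝ×ℝ : y > 0}. Suppose u : Ω → ℝ is three times continuously differentiable in the space variables and once in time, with continuous mixed derivative ∂_t ∂_y u, and u is L_γ-caloric on Ω, i.e. Δu + (γ/y) ∂_y u = ∂_t u on Ω. Then the function w := y^γ ∂_y u is L_{−γ}-caloric on Ω, i.e. Δw − (γ/y) ∂_y w = ∂_t w on Ω. -/

import Mathlib

open MeasureTheory Real

/-- Partial derivative in the `i`-th tangential (`x'`) direction for a space-time
function on `(ℝ^{n-1} × ℝ) × ℝ`, points written `((x', y), t)`. -/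
noncomputable def pdxT {m : ℕ} (i : Fin m) (u : (EuclideanSpace ℝ (Fin m) × ℝ) × ℝ → ℝ)
    (p : (EuclideanSpace ℝ (Fin m) × ℝ) × ℝ) : ℝ :=
  deriv (fun s : ℝ => u ((p.1.1 + s • EuclideanSpace.single i (1 : ℝ), p.1.2), p.2)) 0

/-- Partial derivative in the `y` direction. -/
noncomputable def pdyT {m : ℕ} (u : (EuclideanSpace ℝ (Fin m) × ℝ) × ℝ → ℝ)
    (p : (EuclideanSpace ℝ (Fin m) × ℝ) × ℝ) : ℝ :=
  deriv (fun s : ℝ => u ((p.1.1, s), p.2)) p.1.2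

/-- Partial derivative in the time direction. -/
noncomputable def pdtT {m : ℕ} (u : (EuclideanSpace ℝ (Fin m) × ℝ) × ℝ → ℝ)
    (p : (EuclideanSpace ℝ (Fin m) × ℝ) × ℝ) : ℝ :=
  deriv (fun s : ℝ => u (p.1, s)) p.2

/-- Laplacian in all `n = m + 1` space variables `(x', y)` of a space-time function. -/
noncomputable def lapT {m : ℕ} (u : (EuclideanSpace ℝ (Fin m) × ℝ) × ℝ → ℝ)
    (p : (EuclideanSpace ℝ (Fin m) × ℝ) × ℝ) : ℝ :=
  (∑ i : Fin m, pdxT i (pdxT i u) p) + pdyT (pdyT u) p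

/-!
Write `w = y^γ φ` with `φ = ∂_y u`. A one-variable computation gives
`∂_y² w - (γ/y) ∂_y w = y^γ (∂_y² φ + (γ/y) ∂_y φ - (γ/y²) φ)`, and the tangential derivatives
commute with the weight `y^γ`, so `Δw - (γ/y) ∂_y w = y^γ ∂_y (Δu + (γ/y) ∂_y u)`. By the
equation for `u` this is `y^γ ∂_y ∂_t u`, which is `∂_t w` once `∂_y ∂_t u = ∂_t ∂_y u`.
The spatial derivatives commute because `u` is `C³` in space; for the exchange of `∂_t` and `∂_y`
only `∂_t ∂_y u` is known to be continuous, and Peano's form of Schwarz's theorem is what applies.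
-/

open Filter Topology Set Metric

lemma abs_sub_sub_mul_le_of_hasDerivAt {φ φ' : ℝ → ℝ} {c δ L ε : ℝ}
    (hφ : ∀ x ∈ closedBall c δ, HasDerivAt φ (φ' x) x)
    (hbound : ∀ x ∈ closedBall c δ, |φ' x - L| ≤ ε) {x : ℝ} (hx : x ∈ closedBall c δ) :
    |φ x - φ c - L * (x - c)| ≤ ε * |x - c| := by
  have hc : c ∈ closedBall c δ := mem_closedBall_self (nonempty_closedBall.mp ⟨x, hx⟩)
  have key := (convex_closedBall c δ).norm_image_sub_le_of_norm_hasDerivWithin_le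
    (f := fun x => φ x - L * x) (fun x hx => ((hφ x hx).sub ((hasDerivAt_id x).const_mul L)
      |>.congr_deriv (by simp)).hasDerivWithinAt) hbound hc hx
  calc |φ x - φ c - L * (x - c)| = |φ x - L * x - (φ c - L * c)| := by ring_nf
    _ ≤ ε * |x - c| := key

/-- Peano's form of Schwarz's theorem: only the mixed derivative `∂_r ∂_σ f` has to be
continuous. -/
theorem hasDerivAt_deriv_of_continuousAt_mixed {f : ℝ → ℝ → ℝ} {a b : ℝ}
    (hσ : ∀ᶠ p in 𝓝 (a, b), DifferentiableAt ℝ (fun σ => f σ p.2) p.1)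
    (hr : ∀ᶠ p in 𝓝 (a, b), DifferentiableAt ℝ (f p.1) p.2)
    (hmix : ∀ᶠ p in 𝓝 (a, b), DifferentiableAt ℝ (fun r => deriv (fun σ => f σ r) p.1) p.2)
    (hcont : ContinuousAt (fun p : ℝ × ℝ => deriv (fun r => deriv (fun σ => f σ r) p.1) p.2)
      (a, b)) :
    HasDerivAt (fun σ => deriv (f σ) b) (deriv (fun r => deriv (fun σ => f σ r) a) b) a := by
  set g : ℝ × ℝ → ℝ := fun p => deriv (fun r => deriv (fun σ => f σ r) p.1) p.2
  set L := g (a, b)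
  rw [hasDerivAt_iff_isLittleO, Asymptotics.isLittleO_iff]
  intro ε hε
  obtain ⟨δ, hδ, hgood⟩ := nhds_basis_closedBall.eventually_iff.mp <|
    (hσ.and hr).and (hmix.and (hcont.eventually (closedBall_mem_nhds L hε)))
  simp only [← closedBall_prod_same, mem_prod] at hgood
  have mvt_r : ∀ σ ∈ closedBall a δ, ∀ r ∈ closedBall b δ,
      |deriv (fun σ => f σ r) σ - deriv (fun σ => f σ b) σ - L * (r - b)| ≤ ε * |r - b| :=
    fun σ hσ r hr => abs_sub_sub_mul_le_of_hasDerivAt (φ := fun r => deriv (fun σ => f σ r) σ)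
      (fun r hr => (hgood (x := (σ, r)) ⟨hσ, hr⟩).2.1.hasDerivAt)
      (fun r hr => by simpa [← Real.dist_eq] using (hgood (x := (σ, r)) ⟨hσ, hr⟩).2.2) hr
  have mvt_σ : ∀ s ∈ closedBall a δ, ∀ r ∈ closedBall b δ,
      |(f s r - f a r - (s - a) * L * r) - (f s b - f a b - (s - a) * L * b)|
        ≤ ε * |s - a| * |r - b| := by
    intro s hs r hr
    have hb : b ∈ closedBall b δ := mem_closedBall_self hδ.le
    have := abs_sub_sub_mul_le_of_hasDerivAt (φ := fun σ => f σ r - f σ b)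
      (fun σ hσ => (hgood (x := (σ, r)) ⟨hσ, hr⟩).1.1.hasDerivAt.sub
        (hgood (x := (σ, b)) ⟨hσ, hb⟩).1.1.hasDerivAt)
      (fun σ hσ => mvt_r σ hσ r hr) hs
    calc _ = |f s r - f s b - (f a r - f a b) - L * (r - b) * (s - a)| := by ring_nf
      _ ≤ _ := by linarith
  filter_upwards [closedBall_mem_nhds a hδ] with s hs
  have hderiv : HasDerivAt (fun r => f s r - f a r - (s - a) * L * r)
      (deriv (f s) b - deriv (f a) b - (s - a) * L) b := by
    have hb : (s, b) ∈ closedBall a δ ×ˢ closedBall b δ := ⟨hs, mem_closedBall_self hδ.le⟩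
    have ha : (a, b) ∈ closedBall a δ ×ˢ closedBall b δ :=
      ⟨mem_closedBall_self hδ.le, mem_closedBall_self hδ.le⟩
    simpa using ((hgood hb).1.2.hasDerivAt.fun_sub (hgood ha).1.2.hasDerivAt).fun_sub
      ((hasDerivAt_id b).const_mul ((s - a) * L))
  -- by `mvt_σ`, this function is `ε|s - a|`-Lipschitz at `b`, which bounds its derivative there
  have := hderiv.le_of_lip' (C := ε * |s - a|) (by positivity) <| by
    filter_upwards [closedBall_mem_nhds b hδ] with r hr
    simpa [Real.norm_eq_abs, mul_right_comm ε] using mvt_σ s hs r hr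
  simpa [Real.norm_eq_abs, mul_comm] using this

section LineDeriv

variable {E : Type*} [NormedAddCommGroup E] [NormedSpace ℝ E] {f : E → ℝ} {U : Set E}

lemma ContDiffOn.eqOn_lineDeriv_fderiv {n : WithTop ℕ∞} (hf : ContDiffOn ℝ n f U) (hn : n ≠ 0)
    (hU : IsOpen U) (a : E) :
    EqOn (fun z => lineDeriv ℝ f z a) (fun z => fderiv ℝ f z a) U := fun _ hz =>
  ((hf.differentiableOn hn).differentiableAt (hU.mem_nhds hz)).lineDeriv_eq_fderiv

lemma ContDiffOn.lineDeriv_of_isOpen {m n : WithTop ℕ∞} (hf : ContDiffOn ℝ n f U) (hU : IsOpen U)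
    (hmn : m + 1 ≤ n) (a : E) : ContDiffOn ℝ m (fun z => lineDeriv ℝ f z a) U := by
  refine ((hf.fderiv_of_isOpen hU hmn).clm_apply contDiffOn_const).congr
    (hf.eqOn_lineDeriv_fderiv ?_ hU a)
  rintro rfl
  simp at hmn

lemma ContDiffOn.lineDeriv_lineDeriv_comm (hf : ContDiffOn ℝ 2 f U) (hU : IsOpen U)
    {z : E} (hz : z ∈ U) (a b : E) :
    lineDeriv ℝ (fun w => lineDeriv ℝ f w a) z b
      = lineDeriv ℝ (fun w => lineDeriv ℝ f w b) z a := by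
  have hdiff : ∀ c, DifferentiableAt ℝ (fun w => fderiv ℝ f w c) z := fun c =>
    ((hf.fderiv_of_isOpen hU le_rfl).clm_apply contDiffOn_const).differentiableOn
      one_ne_zero z hz |>.differentiableAt (hU.mem_nhds hz)
  have hd2 : DifferentiableAt ℝ (fderiv ℝ f) z :=
    ((hf.fderiv_of_isOpen hU le_rfl).differentiableOn one_ne_zero z hz).differentiableAt
      (hU.mem_nhds hz)
  have hsecond : ∀ c d,
      lineDeriv ℝ (fun w => lineDeriv ℝ f w c) z d = fderiv ℝ (fderiv ℝ f) z d c := by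
    intro c d
    rw [((hf.eqOn_lineDeriv_fderiv two_ne_zero hU c).eventuallyEq_of_mem
        (hU.mem_nhds hz)).lineDeriv_eq, (hdiff c).lineDeriv_eq_fderiv,
      fderiv_clm_apply hd2 (differentiableAt_const c)]
    simp
  rw [hsecond, hsecond]
  exact ((hf.contDiffAt (hU.mem_nhds hz)).isSymmSndFDerivAt (by simp)).eq b a

lemma ContDiffOn.lineDeriv_lineDeriv_lineDeriv_comm (hf : ContDiffOn ℝ 3 f U) (hU : IsOpen U)
    {z : E} (hz : z ∈ U) (a b c : E) :
    lineDeriv ℝ (fun w => lineDeriv ℝ (fun w' => lineDeriv ℝ f w' a) w b) z c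
      = lineDeriv ℝ (fun w => lineDeriv ℝ (fun w' => lineDeriv ℝ f w' c) w a) z b := by
  rw [(hf.lineDeriv_of_isOpen hU (m := 2) le_rfl a).lineDeriv_lineDeriv_comm hU hz b c]
  refine Filter.EventuallyEq.lineDeriv_eq ?_
  filter_upwards [hU.mem_nhds hz] with w hw
  exact (hf.of_le (by norm_num)).lineDeriv_lineDeriv_comm hU hw a c

end LineDeriv

lemma deriv_deriv_rpow_mul_sub {φ φ' : ℝ → ℝ} {φ'' γ y : ℝ} (hy : 0 < y)
    (hφ : ∀ᶠ s in 𝓝 y, HasDerivAt φ (φ' s) s) (hφ' : HasDerivAt φ' φ'' y) :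
    deriv (deriv fun s => s ^ γ * φ s) y - γ / y * deriv (fun s => s ^ γ * φ s) y
      = y ^ γ * (φ'' + γ / y * φ' y - γ / y ^ 2 * φ y) := by
  have hw : deriv (fun s => s ^ γ * φ s) =ᶠ[𝓝 y]
      fun s => γ * s ^ (γ - 1) * φ s + s ^ γ * φ' s := by
    filter_upwards [hφ, lt_mem_nhds hy] with s hs hs0
    exact ((Real.hasDerivAt_rpow_const (Or.inl hs0.ne')).mul hs).deriv
  have hw' : HasDerivAt (fun s => γ * s ^ (γ - 1) * φ s + s ^ γ * φ' s)
      (γ * ((γ - 1) * y ^ (γ - 1 - 1)) * φ y + γ * y ^ (γ - 1) * φ' y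
        + (γ * y ^ (γ - 1) * φ' y + y ^ γ * φ'')) y :=
    ((((Real.hasDerivAt_rpow_const (Or.inl hy.ne')).const_mul γ).mul hφ.self_of_nhds).add
      ((Real.hasDerivAt_rpow_const (Or.inl hy.ne')).mul hφ'))
  rw [hw.deriv_eq, hw'.deriv, hw.eq_of_nhds]
  have h1 : y ^ (γ - 1) = y ^ γ / y := by rw [Real.rpow_sub_one hy.ne']
  have h2 : y ^ (γ - 1 - 1) = y ^ γ / y ^ 2 := by
    rw [Real.rpow_sub_one hy.ne', h1]; ring
  rw [h1, h2]
  field_simp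
  ring

section PartialDerivatives

variable {m : ℕ}

lemma pdxT_eq_lineDeriv (i : Fin m) (G : (EuclideanSpace ℝ (Fin m) × ℝ) × ℝ → ℝ)
    (z : EuclideanSpace ℝ (Fin m) × ℝ) (t : ℝ) :
    pdxT i G (z, t) = lineDeriv ℝ (fun z => G (z, t)) z (EuclideanSpace.single i 1, 0) := by
  obtain ⟨x, y⟩ := z
  simp [pdxT, lineDeriv]

lemma pdyT_eq_lineDeriv (G : (EuclideanSpace ℝ (Fin m) × ℝ) × ℝ → ℝ)
    (z : EuclideanSpace ℝ (Fin m) × ℝ) (t : ℝ) :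
    pdyT G (z, t) = lineDeriv ℝ (fun z => G (z, t)) z (0, 1) := by
  obtain ⟨x, y⟩ := z
  simpa [pdyT, lineDeriv, add_comm] using (deriv_comp_const_add (fun σ => G ((x, σ), t)) y 0).symm

end PartialDerivatives

section Slices

variable {m : ℕ} {G : (EuclideanSpace ℝ (Fin m) × ℝ) × ℝ → ℝ}
  {U : Set (EuclideanSpace ℝ (Fin m) × ℝ)} {t : ℝ}

lemma contDiffOn_pdxT_slice {k : WithTop ℕ∞} (hG : ContDiffOn ℝ (k + 1) (fun z => G (z, t)) U)
    (hU : IsOpen U) (i : Fin m) : ContDiffOn ℝ k (fun z => pdxT i G (z, t)) U := by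
  simpa only [pdxT_eq_lineDeriv] using hG.lineDeriv_of_isOpen hU le_rfl _

lemma contDiffOn_pdyT_slice {k : WithTop ℕ∞} (hG : ContDiffOn ℝ (k + 1) (fun z => G (z, t)) U)
    (hU : IsOpen U) : ContDiffOn ℝ k (fun z => pdyT G (z, t)) U := by
  simpa only [pdyT_eq_lineDeriv] using hG.lineDeriv_of_isOpen hU le_rfl _

lemma hasDerivAt_pdyT_of_contDiffOn {x : EuclideanSpace ℝ (Fin m)} {s : ℝ}
    (hG : ContDiffOn ℝ 1 (fun z => G (z, t)) U) (hU : IsOpen U) (hz : (x, s) ∈ U) :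
    HasDerivAt (fun σ => G ((x, σ), t)) (pdyT G ((x, s), t)) s :=
  ((hG.differentiableOn one_ne_zero _ hz).differentiableAt (hU.mem_nhds hz)).comp s
    ((differentiableAt_const x).prodMk differentiableAt_id) |>.hasDerivAt

lemma pdyT_pdxT_pdxT (hG : ContDiffOn ℝ 3 (fun z => G (z, t)) U) (hU : IsOpen U)
    {z : EuclideanSpace ℝ (Fin m) × ℝ} (hz : z ∈ U) (i j : Fin m) :
    pdyT (pdxT i (pdxT j G)) (z, t) = pdxT i (pdxT j (pdyT G)) (z, t) := by
  simp only [pdxT_eq_lineDeriv, pdyT_eq_lineDeriv]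
  exact hG.lineDeriv_lineDeriv_lineDeriv_comm hU hz _ _ _

lemma hasDerivAt_lapT (hG : ContDiffOn ℝ 3 (fun z => G (z, t)) U) (hU : IsOpen U)
    {x : EuclideanSpace ℝ (Fin m)} {s : ℝ} (hz : (x, s) ∈ U) :
    HasDerivAt (fun σ => lapT G ((x, σ), t)) (lapT (pdyT G) ((x, s), t)) s := by
  have hxx : ∀ i, HasDerivAt (fun σ => pdxT i (pdxT i G) ((x, σ), t))
      (pdxT i (pdxT i (pdyT G)) ((x, s), t)) s := fun i =>
    pdyT_pdxT_pdxT hG hU hz i i ▸ hasDerivAt_pdyT_of_contDiffOn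
      (contDiffOn_pdxT_slice (contDiffOn_pdxT_slice hG hU i) hU i) hU hz
  exact (HasDerivAt.fun_sum fun i _ => hxx i).add <|
    hasDerivAt_pdyT_of_contDiffOn (contDiffOn_pdyT_slice (contDiffOn_pdyT_slice hG hU) hU) hU hz

end Slices

section Weight

variable {m : ℕ} (h : ℝ → ℝ) (G : (EuclideanSpace ℝ (Fin m) × ℝ) × ℝ → ℝ)

lemma pdxT_weight_mul (i : Fin m) :
    pdxT i (fun q => h q.1.2 * G q) = fun q => h q.1.2 * pdxT i G q :=
  funext fun q => deriv_const_mul_field (𝕜 := ℝ)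
    (v := fun s => G ((q.1.1 + s • EuclideanSpace.single i 1, q.1.2), q.2)) (h q.1.2)

lemma pdtT_weight_mul : pdtT (fun q => h q.1.2 * G q) = fun q => h q.1.2 * pdtT G q :=
  funext fun q => deriv_const_mul_field (𝕜 := ℝ) (v := fun s => G (q.1, s)) (h q.1.2)

end Weight

section Conjugation

variable {m : ℕ} {G : (EuclideanSpace ℝ (Fin m) × ℝ) × ℝ → ℝ}
  {U : Set (EuclideanSpace ℝ (Fin m) × ℝ)} {x : EuclideanSpace ℝ (Fin m)} {y t : ℝ}

lemma lapT_rpow_mul_pdyT_sub (γ : ℝ) (hG : ContDiffOn ℝ 3 (fun z => G (z, t)) U)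
    (hU : IsOpen U) (hz : (x, y) ∈ U) (hy : 0 < y) :
    lapT (fun q => q.1.2 ^ γ * pdyT G q) ((x, y), t)
        - γ / y * pdyT (fun q => q.1.2 ^ γ * pdyT G q) ((x, y), t)
      = y ^ γ * (lapT (pdyT G) ((x, y), t) + γ / y * pdyT (pdyT G) ((x, y), t)
        - γ / y ^ 2 * pdyT G ((x, y), t)) := by
  have hline : ∀ᶠ s in 𝓝 y, (x, s) ∈ U :=
    (Continuous.prodMk_right x).continuousAt.preimage_mem_nhds (hU.mem_nhds hz)
  have hφ : ∀ᶠ s in 𝓝 y,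
      HasDerivAt (fun σ => pdyT G ((x, σ), t)) (pdyT (pdyT G) ((x, s), t)) s :=
    hline.mono fun s hs => hasDerivAt_pdyT_of_contDiffOn
      (contDiffOn_pdyT_slice (k := 2) (hG.of_le (by norm_num)) hU |>.of_le (by norm_num)) hU hs
  have hφ' : HasDerivAt (fun σ => pdyT (pdyT G) ((x, σ), t))
      (pdyT (pdyT (pdyT G)) ((x, y), t)) y :=
    hasDerivAt_pdyT_of_contDiffOn (contDiffOn_pdyT_slice (contDiffOn_pdyT_slice hG hU) hU) hU hz
  have hw : pdyT (pdyT (fun q => q.1.2 ^ γ * pdyT G q)) ((x, y), t)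
        - γ / y * pdyT (fun q => q.1.2 ^ γ * pdyT G q) ((x, y), t)
      = y ^ γ * (pdyT (pdyT (pdyT G)) ((x, y), t) + γ / y * pdyT (pdyT G) ((x, y), t)
        - γ / y ^ 2 * pdyT G ((x, y), t)) :=
    deriv_deriv_rpow_mul_sub hy hφ hφ'
  rw [lapT, add_sub_assoc, hw]
  simp only [pdxT_weight_mul (· ^ γ), lapT, ← Finset.mul_sum]
  ring

end Conjugation

lemma hasDerivAt_pdtT_of_continuousOn_mixed {m : ℕ}
    {u : (EuclideanSpace ℝ (Fin m) × ℝ) × ℝ → ℝ} {Ω : Set ((EuclideanSpace ℝ (Fin m) × ℝ) × ℝ)}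
    (hΩ : IsOpen Ω) (hspace : ∀ t, ContDiffOn ℝ 1 (fun z => u (z, t)) {z | (z, t) ∈ Ω})
    (htime : ∀ p ∈ Ω, DifferentiableAt ℝ (fun s => u (p.1, s)) p.2)
    (hmix : ∀ p ∈ Ω, DifferentiableAt ℝ (fun s => pdyT u (p.1, s)) p.2)
    (hmixc : ContinuousOn (pdtT (pdyT u)) Ω) {x : EuclideanSpace ℝ (Fin m)} {y t : ℝ}
    (hp : ((x, y), t) ∈ Ω) :
    HasDerivAt (fun σ => pdtT u ((x, σ), t)) (pdtT (pdyT u) ((x, y), t)) y := by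
  have hι : Continuous fun q : ℝ × ℝ => ((x, q.1), q.2) := by fun_prop
  have hplane : ∀ᶠ q in 𝓝 (y, t), ((x, q.1), q.2) ∈ Ω :=
    hι.continuousAt.preimage_mem_nhds (hΩ.mem_nhds hp)
  have hcont : ContinuousAt (pdtT (pdyT u) ∘ fun q : ℝ × ℝ => ((x, q.1), q.2)) (y, t) :=
    (hmixc.continuousAt (hΩ.mem_nhds hp)).comp_of_eq hι.continuousAt rfl
  exact hasDerivAt_deriv_of_continuousAt_mixed (f := fun σ r => u ((x, σ), r))
    (hplane.mono fun q hq => (hasDerivAt_pdyT_of_contDiffOn (hspace q.2)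
      (hΩ.preimage (by fun_prop)) hq).differentiableAt)
    (hplane.mono fun q hq => htime _ hq) (hplane.mono fun q hq => hmix _ hq) hcont

theorem stmt_2 (γ : ℝ) (n : ℕ)
    (Ω : Set ((EuclideanSpace ℝ (Fin (n - 1)) × ℝ) × ℝ))
    (hΩopen : IsOpen Ω) (hΩsub : Ω ⊆ {p | 0 < p.1.2})
    (u : (EuclideanSpace ℝ (Fin (n - 1)) × ℝ) × ℝ → ℝ)
    -- three times continuously differentiable in the space variables on Ω:
    (hspace : ∀ t : ℝ, ContDiffOn ℝ 3 (fun z : EuclideanSpace ℝ (Fin (n - 1)) × ℝ => u (z, t))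
      {z | (z, t) ∈ Ω})
    -- once continuously differentiable in time on Ω:
    (htime : (∀ p ∈ Ω, DifferentiableAt ℝ (fun s : ℝ => u (p.1, s)) p.2) ∧
      ContinuousOn (pdtT u) Ω)
    -- existence and continuity of the mixed derivative ∂_t ∂_y u on Ω:
    (hmix : (∀ p ∈ Ω, DifferentiableAt ℝ (fun s : ℝ => pdyT u (p.1, s)) p.2) ∧
      ContinuousOn (pdtT (pdyT u)) Ω)
    -- u is L_γ-caloric on Ω:
    (heq : ∀ p ∈ Ω, lapT u p + (γ / p.1.2) * pdyT u p = pdtT u p) :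
    ∀ p ∈ Ω,
      lapT (fun q => q.1.2 ^ γ * pdyT u q) p
        - (γ / p.1.2) * pdyT (fun q => q.1.2 ^ γ * pdyT u q) p
        = pdtT (fun q => q.1.2 ^ γ * pdyT u q) p := by
  rintro ⟨⟨x, y⟩, t⟩ hp
  have hy : 0 < y := hΩsub hp
  have hslice : IsOpen {z | (z, t) ∈ Ω} := hΩopen.preimage (by fun_prop)
  have hline : ∀ᶠ s in 𝓝 y, ((x, s), t) ∈ Ω :=
    (by fun_prop : Continuous fun s : ℝ => ((x, s), t)).continuousAt.preimage_mem_nhds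
      (hΩopen.mem_nhds hp)
  have hcaloric : HasDerivAt (fun σ => lapT u ((x, σ), t) + γ / σ * pdyT u ((x, σ), t))
      (lapT (pdyT u) ((x, y), t) + (γ * -(y ^ 2)⁻¹ * pdyT u ((x, y), t)
        + γ / y * pdyT (pdyT u) ((x, y), t))) y :=
    (hasDerivAt_lapT (hspace t) hslice hp).add (((hasDerivAt_inv hy.ne').const_mul γ).mul
      (hasDerivAt_pdyT_of_contDiffOn (contDiffOn_pdyT_slice (k := 2) (hspace t) hslice
        |>.of_le (by norm_num)) hslice hp))
  have hdt : pdtT (pdyT u) ((x, y), t) = lapT (pdyT u) ((x, y), t)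
      + γ / y * pdyT (pdyT u) ((x, y), t) - γ / y ^ 2 * pdyT u ((x, y), t) := by
    rw [(hasDerivAt_pdtT_of_continuousOn_mixed hΩopen (fun r => (hspace r).of_le (by norm_num))
      htime.1 hmix.1 hmix.2 hp).unique
      (hcaloric.congr_of_eventuallyEq (hline.mono fun s hs => (heq _ hs).symm))]
    ring
  rw [lapT_rpow_mul_pdyT_sub γ (hspace t) hslice hp hy]
  simp only [pdtT_weight_mul (· ^ γ), hdt]
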